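/- A compatible function f : Z_2 → Z_2 is ergodic if and only if it can be represented as f(x) = 1 + x + 2·(v(x+1) − v(x)) for some compatible v : Z_2 → Z_2. -/

import Mathlib

open scoped BigOperators

/-- The `j`-th binary digit of a 2-adic integer, as an element of `ZMod 2`. -/
noncomputable def bit2 (j : ℕ) (x : ℤ_[2]) : ZMod 2 := ((x.appr (j+1) / 2^j : ℕ) : ZMod 2)

/-- Compatibility = 1-Lipschitz w.r.t. the 2-adic metric. -/
def Compatible (f : ℤ_[2] → ℤ_[2]) : Prop := ∀ x y : ℤ_[2], ‖f x - f y‖ ≤ ‖x - y‖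

/-- Reduction of a 2-adic integer modulo `2^n`. -/
noncomputable def padMod (n : ℕ) (x : ℤ_[2]) : ZMod (2^n) := (x.appr n : ZMod (2^n))

/-- The map induced by `f : ℤ₂ → ℤ₂` on `ZMod (2^n)` (via canonical lifts). -/
noncomputable def inducedMap (n : ℕ) (f : ℤ_[2] → ℤ_[2]) : ZMod (2^n) → ZMod (2^n) :=
  fun a => padMod n (f ((a.val : ℕ) : ℤ_[2]))

/-- A self-map of a set is a single cycle (transitive on points). -/
def IsSingleCycle {α : Type*} (g : α → α) : Prop := ∀ a b : α, ∃ k : ℕ, g^[k] a = b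

/-- Measure preservation: `f` induces a bijection modulo `2^n` for every `n`. -/
def MeasurePreservingZ (f : ℤ_[2] → ℤ_[2]) : Prop := ∀ n : ℕ, Function.Bijective (inducedMap n f)

/-- Ergodicity: `f` induces a single-cycle permutation modulo `2^n` for every `n`. -/
def ErgodicZ (f : ℤ_[2] → ℤ_[2]) : Prop := ∀ n : ℕ, IsSingleCycle (inducedMap n f)

/-- Induced map modulo `2^n` of an `m`-variate map on `(ℤ₂)^m`. -/
noncomputable def inducedMapM (m n : ℕ) (G : (Fin m → ℤ_[2]) → Fin m → ℤ_[2]) :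
    (Fin m → ZMod (2^n)) → Fin m → ZMod (2^n) :=
  fun a j => padMod n (G (fun i => (((a i).val : ℕ) : ℤ_[2])) j)

/-- Coordinatewise compatibility of an `m`-variate map. -/
def CompatibleM (m : ℕ) (G : (Fin m → ℤ_[2]) → Fin m → ℤ_[2]) : Prop :=
  ∀ (n : ℕ) (x y : Fin m → ℤ_[2]), (∀ i, padMod n (x i) = padMod n (y i)) →
    ∀ j, padMod n (G x j) = padMod n (G y j)

/-- Ergodicity of an `m`-variate map: single cycle modulo `2^n` for all `n`. -/
def ErgodicM (m : ℕ) (G : (Fin m → ℤ_[2]) → Fin m → ℤ_[2]) : Prop :=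
  ∀ n : ℕ, IsSingleCycle (inducedMapM m n G)

/-- The 2-adic integer with prescribed binary digits. -/
noncomputable def ofBits (b : ℕ → ZMod 2) : ℤ_[2] := ∑' i : ℕ, ((b i).val : ℤ_[2]) * 2^i

/-- Bitwise XOR of 2-adic integers. -/
noncomputable def xor2 (x y : ℤ_[2]) : ℤ_[2] := ofBits (fun i => bit2 i x + bit2 i y)

/-- Bitwise AND of 2-adic integers. -/
noncomputable def and2 (x y : ℤ_[2]) : ℤ_[2] := ofBits (fun i => bit2 i x * bit2 i y)

/-- Bitwise AND of a list, the empty AND being `-1` (the all-ones string). -/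
noncomputable def andL (l : List ℤ_[2]) : ℤ_[2] := l.foldr and2 (-1)

/-!
Write `Tₙ` for the map induced by a compatible `f` modulo `2 ^ n`. If `Tₙ` is a single cycle, then
`Tₙ₊₁` is one iff `f^[2 ^ n] x ≡ x + 2 ^ n (mod 2 ^ (n + 1))` for all `x`.

If `f x = 1 + x + 2 Δv(x)`, then `f^[2 ^ n] x - x - 2 ^ n = 2 ∑_{k < 2 ^ n} Δv(f^[k] x)`. When `Tₙ`
is a single cycle, the orbit of `x` meets every residue mod `2 ^ n` exactly once, so this sum is
`≡ ∑_{j < 2 ^ n} Δv(j) = v(2 ^ n) - v(0) ≡ 0 (mod 2 ^ n)`; induction on `n` gives ergodicity.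

Conversely, if `f` is ergodic then `Tₙ₊₁` commutes with adding `2 ^ n`, so `f y - y - 1` mod
`2 ^ (n + 1)` depends only on `y` mod `2 ^ n`. Its sum over `2 ^ n` consecutive integers therefore
equals its sum along an orbit, which telescopes to `f^[2 ^ n] a - a - 2 ^ n ≡ 0`. Hence the partial
sums over `ℕ` of `w = (f - id - 1) / 2` are 1-Lipschitz for the 2-adic metric, and their continuous
extension is the required `v`.
-/

open Finset Function Filter Topology fwdDiff PadicInt

theorem Function.iterate_injOn_range_minimalPeriod {α : Type*} {g : α → α} {a : α} :
    Set.InjOn (g^[·] a) (range (minimalPeriod g a)) := by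
  rw [coe_range]
  exact iterate_injOn_Iio_minimalPeriod

namespace IsSingleCycle

variable {α : Type*} {g : α → α}

theorem surjective (hg : IsSingleCycle g) : Surjective g := fun b =>
  let ⟨k, hk⟩ := hg (g b) b
  ⟨g^[k] b, by rw [← iterate_succ_apply' g, iterate_succ_apply, hk]⟩

theorem injective [Finite α] (hg : IsSingleCycle g) : Injective g :=
  Finite.injective_iff_surjective.2 hg.surjective

theorem minimalPeriod_pos (hg : IsSingleCycle g) (a : α) : 0 < minimalPeriod g a := by
  obtain ⟨k, hk⟩ := hg (g a) a
  exact IsPeriodicPt.minimalPeriod_pos k.succ_pos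
    (by rwa [IsPeriodicPt, IsFixedPt, iterate_succ_apply])

theorem image_range_minimalPeriod [Fintype α] [DecidableEq α] (hg : IsSingleCycle g) (a : α) :
    (range (minimalPeriod g a)).image (g^[·] a) = univ :=
  eq_univ_of_forall fun b =>
    let ⟨k, hk⟩ := hg a b
    mem_image.2 ⟨k % minimalPeriod g a, mem_range.2 (Nat.mod_lt _ (hg.minimalPeriod_pos a)),
      by rw [iterate_mod_minimalPeriod_eq, hk]⟩

theorem minimalPeriod_eq_card [Fintype α] (hg : IsSingleCycle g) (a : α) :
    minimalPeriod g a = Fintype.card α := by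
  classical
  rw [← card_univ, ← hg.image_range_minimalPeriod a, card_image_of_injOn
    iterate_injOn_range_minimalPeriod, card_range]

theorem sum_range_card_iterate [Fintype α] {M : Type*} [AddCommMonoid M]
    (hg : IsSingleCycle g) (a : α) (h : α → M) :
    ∑ k ∈ range (Fintype.card α), h (g^[k] a) = ∑ b, h b := by
  classical
  rw [← hg.minimalPeriod_eq_card a, ← sum_image iterate_injOn_range_minimalPeriod,
    hg.image_range_minimalPeriod]

end IsSingleCycle

theorem pow_dvd_iff_norm_le {n : ℕ} {z : ℤ_[2]} :
    (2 : ℤ_[2]) ^ n ∣ z ↔ ‖z‖ ≤ (2 : ℝ) ^ (-n : ℤ) := by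
  simpa [Ideal.mem_span_singleton] using (norm_le_pow_iff_mem_span_pow z n).symm

theorem toZModPow_eq_zero_iff {n : ℕ} {z : ℤ_[2]} :
    toZModPow n z = 0 ↔ (2 : ℤ_[2]) ^ n ∣ z := by
  rw [← RingHom.mem_ker, ker_toZModPow, Ideal.mem_span_singleton]
  norm_num

theorem padMod_eq_padMod_iff {n : ℕ} {x y : ℤ_[2]} :
    padMod n x = padMod n y ↔ (2 : ℤ_[2]) ^ n ∣ x - y := by
  rw [← toZModPow_eq_zero_iff, map_sub, sub_eq_zero]
  rfl

theorem padMod_natCast_val (n : ℕ) (a : ZMod (2 ^ n)) : padMod n (a.val : ℤ_[2]) = a := by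
  change toZModPow n _ = a
  rw [map_natCast, ZMod.natCast_zmod_val]

theorem padMod_natCast (n k : ℕ) : padMod n (k : ℤ_[2]) = k :=
  map_natCast (toZModPow n) k

theorem eq_of_forall_pow_dvd_sub {x y : ℤ_[2]} (h : ∀ n, (2 : ℤ_[2]) ^ n ∣ x - y) : x = y := by
  by_contra hxy
  have := (mem_span_pow_iff_le_valuation (x - y) (sub_ne_zero.2 hxy) _).1
    (Ideal.mem_span_singleton.2 (by simpa using h ((x - y).valuation + 1)))
  omega

theorem pow_dvd_sub_appr (x : ℤ_[2]) {n m : ℕ} (h : n ≤ m) : (2 : ℤ_[2]) ^ n ∣ x - x.appr m :=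
  (pow_dvd_pow 2 h).trans (by simpa [Ideal.mem_span_singleton] using x.appr_spec m)

theorem cauchySeq_of_pow_dvd_sub {u : ℕ → ℤ_[2]}
    (h : ∀ n m, n ≤ m → (2 : ℤ_[2]) ^ n ∣ u m - u n) : CauchySeq u := by
  refine Metric.cauchySeq_iff'.2 fun ε hε => ?_
  obtain ⟨N, hN⟩ := exists_pow_lt_of_lt_one hε (by norm_num : (2⁻¹ : ℝ) < 1)
  refine ⟨N, fun m hm => ?_⟩
  rw [dist_eq_norm]
  calc ‖u m - u N‖ ≤ (2 : ℝ) ^ (-N : ℤ) := pow_dvd_iff_norm_le.1 (h N m hm)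
    _ < ε := by rwa [zpow_neg, zpow_natCast, ← inv_pow]

theorem pow_dvd_sub_of_tendsto {n : ℕ} {u : ℕ → ℤ_[2]} {a b : ℤ_[2]}
    (hu : Tendsto u atTop (𝓝 a)) (h : ∀ᶠ m in atTop, (2 : ℤ_[2]) ^ n ∣ u m - b) :
    (2 : ℤ_[2]) ^ n ∣ a - b := by
  rw [pow_dvd_iff_norm_le, ← dist_eq_norm, ← Metric.mem_closedBall]
  refine Metric.isClosed_closedBall.mem_of_tendsto hu (h.mono fun m hm => ?_)
  rwa [Metric.mem_closedBall, dist_eq_norm, ← pow_dvd_iff_norm_le]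

theorem pow_succ_dvd_or_pow_succ_dvd_sub {n : ℕ} {z : ℤ_[2]} (h : (2 : ℤ_[2]) ^ n ∣ z) :
    (2 : ℤ_[2]) ^ (n + 1) ∣ z ∨ (2 : ℤ_[2]) ^ (n + 1) ∣ z - 2 ^ n := by
  obtain ⟨t, rfl⟩ := h
  have ht : (2 : ℤ_[2]) ∣ t - t.appr 1 := by
    simpa only [pow_one] using pow_dvd_sub_appr (n := 1) t le_rfl
  have hlt : t.appr 1 < 2 := by simpa using t.appr_lt 1
  rw [pow_succ]
  interval_cases t.appr 1
  · exact Or.inl (mul_dvd_mul_left _ (by simpa using ht))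
  · exact Or.inr (by rw [← mul_sub_one]; exact mul_dvd_mul_left _ (by simpa using ht))

theorem not_pow_succ_dvd_pow (n : ℕ) : ¬(2 : ℤ_[2]) ^ (n + 1) ∣ 2 ^ n := by
  rw [pow_dvd_pow_iff two_ne_zero, not_le]
  · exact n.lt_succ_self
  · rw [not_isUnit_iff]
    exact (norm_p (p := 2)).trans_lt (by norm_num)

theorem compatible_iff_pow_dvd {f : ℤ_[2] → ℤ_[2]} :
    Compatible f ↔
      ∀ (n : ℕ) (x y : ℤ_[2]), (2 : ℤ_[2]) ^ n ∣ x - y → (2 : ℤ_[2]) ^ n ∣ f x - f y := by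
  refine ⟨fun hf n x y h => pow_dvd_iff_norm_le.2 ((hf x y).trans (pow_dvd_iff_norm_le.1 h)),
    fun hf x y => ?_⟩
  rcases eq_or_ne x y with rfl | hxy
  · simp
  have hnorm : ‖x - y‖ = (2 : ℝ) ^ (-(x - y).valuation : ℤ) := by
    simpa using norm_eq_zpow_neg_valuation (sub_ne_zero.2 hxy)
  rw [hnorm]
  exact pow_dvd_iff_norm_le.1 (hf _ x y (pow_dvd_iff_norm_le.2 hnorm.le))

theorem Compatible.pow_dvd_sub {f : ℤ_[2] → ℤ_[2]} (hf : Compatible f) {n : ℕ} {x y : ℤ_[2]}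
    (h : (2 : ℤ_[2]) ^ n ∣ x - y) : (2 : ℤ_[2]) ^ n ∣ f x - f y :=
  compatible_iff_pow_dvd.1 hf n x y h

theorem Compatible.toZModPow_eq {f : ℤ_[2] → ℤ_[2]} (hf : Compatible f) {n : ℕ} {x y : ℤ_[2]}
    (h : (2 : ℤ_[2]) ^ n ∣ x - y) : toZModPow n (f x) = toZModPow n (f y) :=
  padMod_eq_padMod_iff.2 (hf.pow_dvd_sub h)

theorem Compatible.eq_of_forall_natCast {f g : ℤ_[2] → ℤ_[2]} (hf : Compatible f)
    (hg : Compatible g) (h : ∀ k : ℕ, f k = g k) (x : ℤ_[2]) : f x = g x :=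
  eq_of_forall_pow_dvd_sub fun n => by
    have hx := pow_dvd_sub_appr x (le_refl n)
    convert dvd_add (hf.pow_dvd_sub hx) (dvd_sub_comm.1 (hg.pow_dvd_sub hx)) using 1
    rw [h]
    ring

theorem compatible_add_right (c : ℤ_[2]) : Compatible (· + c) := fun x y => by simp

theorem Compatible.fwdDiff {v : ℤ_[2] → ℤ_[2]} (hv : Compatible v) (c : ℤ_[2]) :
    Compatible (Δ_[c] v) :=
  compatible_iff_pow_dvd.2 fun n x y h => by
    have hc := hv.pow_dvd_sub (x := x + c) (y := y + c) (by simpa using h)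
    convert dvd_sub hc (hv.pow_dvd_sub h) using 1
    unfold _root_.fwdDiff
    ring

theorem Compatible.one_add_add_two_mul {f g : ℤ_[2] → ℤ_[2]} (hg : Compatible g)
    (hfg : ∀ x, f x = 1 + x + 2 * g x) : Compatible f :=
  compatible_iff_pow_dvd.2 fun n x y h => by
    rw [hfg, hfg]
    convert dvd_add h (dvd_mul_of_dvd_right (hg.pow_dvd_sub h) 2) using 1
    ring

theorem pow_dvd_sub_of_forall_pow_dvd_add_pow_sub {n : ℕ} {S : ℕ → ℤ_[2]}
    (hS : ∀ a, (2 : ℤ_[2]) ^ n ∣ S (a + 2 ^ n) - S a) {a b : ℕ}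
    (h : (2 : ℤ_[2]) ^ n ∣ (a : ℤ_[2]) - b) : (2 : ℤ_[2]) ^ n ∣ S a - S b := by
  have hmod : ∀ q r, (2 : ℤ_[2]) ^ n ∣ S (r + 2 ^ n * q) - S r := by
    intro q r
    induction q with
    | zero => simp
    | succ q ih =>
      rw [mul_add_one, ← add_assoc]
      convert dvd_add (hS (r + 2 ^ n * q)) ih using 1
      ring
  have hab : a % 2 ^ n = b % 2 ^ n := by
    rw [← ZMod.natCast_eq_natCast_iff', ← padMod_natCast, ← padMod_natCast]
    exact padMod_eq_padMod_iff.2 h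
  rw [← Nat.mod_add_div a (2 ^ n), ← Nat.mod_add_div b (2 ^ n), hab]
  convert dvd_sub (hmod (a / 2 ^ n) (b % 2 ^ n)) (hmod (b / 2 ^ n) (b % 2 ^ n)) using 1
  ring

theorem exists_compatible_eq_natCast {S : ℕ → ℤ_[2]}
    (hS : ∀ (n : ℕ) (a b : ℕ), (2 : ℤ_[2]) ^ n ∣ (a : ℤ_[2]) - b → (2 : ℤ_[2]) ^ n ∣ S a - S b) :
    ∃ v : ℤ_[2] → ℤ_[2], Compatible v ∧ ∀ k : ℕ, v k = S k := by
  have happr : ∀ {n m m' : ℕ} {x y : ℤ_[2]}, (2 : ℤ_[2]) ^ n ∣ x - y → n ≤ m → n ≤ m' →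
      (2 : ℤ_[2]) ^ n ∣ S (x.appr m) - S (y.appr m') := fun {_ _ _ x y} h hm hm' =>
    hS _ _ _ (by
      convert dvd_add (dvd_sub h (pow_dvd_sub_appr x hm)) (pow_dvd_sub_appr y hm') using 1
      ring)
  choose v hv using fun x : ℤ_[2] => cauchySeq_tendsto_of_complete
    (cauchySeq_of_pow_dvd_sub fun n m hnm => happr (x := x) (y := x) (by simp) hnm le_rfl :
      CauchySeq fun m => S (x.appr m))
  have hvS : ∀ x n, (2 : ℤ_[2]) ^ n ∣ v x - S (x.appr n) := fun x n =>
    pow_dvd_sub_of_tendsto (hv x)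
      (eventually_atTop.2 ⟨n, fun m hm => happr (x := x) (y := x) (by simp) hm le_rfl⟩)
  refine ⟨v, compatible_iff_pow_dvd.2 fun n x y h => ?_,
    fun k => eq_of_forall_pow_dvd_sub fun n => ?_⟩
  · convert dvd_add (dvd_sub (hvS x n) (hvS y n)) (happr h le_rfl le_rfl) using 1
    ring
  · have hk := hS n _ k (dvd_sub_comm.1 (pow_dvd_sub_appr (k : ℤ_[2]) (le_refl n)))
    convert dvd_add (hvS k n) hk using 1
    ring

theorem sum_range_iterate_sub_sub_one {R : Type*} [CommRing R] (f : R → R) (x : R) (N : ℕ) :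
    ∑ k ∈ range N, (f (f^[k] x) - f^[k] x - 1) = f^[N] x - x - N := by
  induction N with
  | zero => simp
  | succ N ih =>
    rw [sum_range_succ, ih, iterate_succ_apply']
    push_cast
    ring

namespace Compatible

variable {f : ℤ_[2] → ℤ_[2]} {n : ℕ}

theorem inducedMap_padMod (hf : Compatible f) (x : ℤ_[2]) :
    inducedMap n f (padMod n x) = padMod n (f x) :=
  padMod_eq_padMod_iff.2 (hf.pow_dvd_sub (padMod_eq_padMod_iff.1 (padMod_natCast_val n _)))

theorem inducedMap_iterate_padMod (hf : Compatible f) (k : ℕ) (x : ℤ_[2]) :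
    (inducedMap n f)^[k] (padMod n x) = padMod n (f^[k] x) := by
  induction k generalizing x with
  | zero => rfl
  | succ k ih => rw [iterate_succ_apply, iterate_succ_apply, hf.inducedMap_padMod, ih]

theorem isSingleCycle_inducedMap_iff (hf : Compatible f) :
    IsSingleCycle (inducedMap n f) ↔ ∀ x y : ℤ_[2], ∃ k, (2 : ℤ_[2]) ^ n ∣ f^[k] x - y := by
  simp_rw [← padMod_eq_padMod_iff, ← hf.inducedMap_iterate_padMod]
  refine ⟨fun h x y => h _ _, fun h a b => ?_⟩
  simpa only [padMod_natCast_val] using h a.val b.val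

theorem pow_dvd_iterate_sub (hf : Compatible f) (hn : IsSingleCycle (inducedMap n f))
    (x : ℤ_[2]) : (2 : ℤ_[2]) ^ n ∣ f^[2 ^ n] x - x := by
  have hperiod := iterate_minimalPeriod (f := inducedMap n f) (x := padMod n x)
  rw [hn.minimalPeriod_eq_card, ZMod.card, hf.inducedMap_iterate_padMod] at hperiod
  exact padMod_eq_padMod_iff.1 hperiod

theorem not_pow_dvd_iterate_sub (hf : Compatible f) (hn : IsSingleCycle (inducedMap n f))
    {k : ℕ} (hk₀ : 0 < k) (hk : k < 2 ^ n) (x : ℤ_[2]) : ¬(2 : ℤ_[2]) ^ n ∣ f^[k] x - x := by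
  rw [← padMod_eq_padMod_iff, ← hf.inducedMap_iterate_padMod]
  intro h
  have := IsPeriodicPt.minimalPeriod_le hk₀ h
  rw [hn.minimalPeriod_eq_card, ZMod.card] at this
  omega

theorem pow_dvd_sub_of_pow_dvd_sub (hf : Compatible f) (hn : IsSingleCycle (inducedMap n f))
    {x y : ℤ_[2]} (h : (2 : ℤ_[2]) ^ n ∣ f x - f y) : (2 : ℤ_[2]) ^ n ∣ x - y := by
  rw [← padMod_eq_padMod_iff, ← hf.inducedMap_padMod, ← hf.inducedMap_padMod] at h
  exact padMod_eq_padMod_iff.1 (hn.injective h)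

theorem sum_range_iterate {M : Type*} [AddCommMonoid M] (hf : Compatible f)
    (hn : IsSingleCycle (inducedMap n f)) {h : ℤ_[2] → M}
    (hh : ∀ x y, (2 : ℤ_[2]) ^ n ∣ x - y → h x = h y) (x : ℤ_[2]) :
    ∑ k ∈ range (2 ^ n), h (f^[k] x) = ∑ b : ZMod (2 ^ n), h b.val := by
  have hpad : ∀ y, h y = h (padMod n y).val := fun y =>
    hh _ _ (padMod_eq_padMod_iff.1 (padMod_natCast_val n _).symm)
  have horbit := hn.sum_range_card_iterate (padMod n x) fun b => h b.val
  rw [ZMod.card] at horbit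
  rw [← horbit]
  exact sum_congr rfl fun k _ => by rw [hf.inducedMap_iterate_padMod, ← hpad]

end Compatible

theorem isSingleCycle_inducedMap_add_one (n : ℕ) : IsSingleCycle (inducedMap n (· + 1)) :=
  (compatible_add_right 1).isSingleCycle_inducedMap_iff.2 fun x y =>
    ⟨(y - x).appr n, by
      rw [add_right_iterate_apply, nsmul_one, ← dvd_neg]
      convert pow_dvd_sub_appr (y - x) le_rfl using 1
      ring⟩

theorem Compatible.sum_range_iterate_eq_sum_range_add {M : Type*} [AddCommMonoid M]
    {f : ℤ_[2] → ℤ_[2]} {n : ℕ} (hf : Compatible f) (hn : IsSingleCycle (inducedMap n f))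
    {h : ℤ_[2] → M} (hh : ∀ x y, (2 : ℤ_[2]) ^ n ∣ x - y → h x = h y) (x a : ℤ_[2]) :
    ∑ k ∈ range (2 ^ n), h (f^[k] x) = ∑ j ∈ range (2 ^ n), h (a + j) := by
  rw [hf.sum_range_iterate hn hh,
    ← (compatible_add_right 1).sum_range_iterate (isSingleCycle_inducedMap_add_one n) hh a]
  simp only [add_right_iterate_apply, nsmul_one]

theorem Compatible.isSingleCycle_inducedMap_succ {f : ℤ_[2] → ℤ_[2]} {n : ℕ}
    (hf : Compatible f) (hn : IsSingleCycle (inducedMap n f))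
    (hstep : ∀ x, (2 : ℤ_[2]) ^ (n + 1) ∣ f^[2 ^ n] x - x - 2 ^ n) :
    IsSingleCycle (inducedMap (n + 1) f) := by
  rw [hf.isSingleCycle_inducedMap_iff] at hn ⊢
  intro x y
  obtain ⟨k, hk⟩ := hn x y
  rcases pow_succ_dvd_or_pow_succ_dvd_sub hk with hk | hk
  · exact ⟨k, hk⟩
  · refine ⟨2 ^ n + k, ?_⟩
    rw [iterate_add_apply]
    convert dvd_add (dvd_add (hstep (f^[k] x)) hk) (dvd_refl ((2 : ℤ_[2]) ^ (n + 1))) using 1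
    ring

namespace ErgodicZ

variable {f : ℤ_[2] → ℤ_[2]} {n : ℕ}

theorem pow_succ_dvd_iterate_sub (hf : Compatible f) (hE : ErgodicZ f) (x : ℤ_[2]) :
    (2 : ℤ_[2]) ^ (n + 1) ∣ f^[2 ^ n] x - x - 2 ^ n := by
  refine (pow_succ_dvd_or_pow_succ_dvd_sub (hf.pow_dvd_iterate_sub (hE n) x)).resolve_left ?_
  exact hf.not_pow_dvd_iterate_sub (hE (n + 1)) (by positivity)
    (Nat.pow_lt_pow_right one_lt_two n.lt_succ_self) x

theorem pow_succ_dvd_add_pow_sub (hf : Compatible f) (hE : ErgodicZ f) (x : ℤ_[2]) :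
    (2 : ℤ_[2]) ^ (n + 1) ∣ f (x + 2 ^ n) - f x - 2 ^ n := by
  refine (pow_succ_dvd_or_pow_succ_dvd_sub (hf.pow_dvd_sub (by simp))).resolve_left fun h => ?_
  apply not_pow_succ_dvd_pow n
  simpa using hf.pow_dvd_sub_of_pow_dvd_sub (hE (n + 1)) h

theorem toZModPow_sub_sub_one_eq (hf : Compatible f) (hE : ErgodicZ f) {x y : ℤ_[2]}
    (h : (2 : ℤ_[2]) ^ n ∣ x - y) :
    toZModPow (n + 1) (f x - x - 1) = toZModPow (n + 1) (f y - y - 1) := by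
  rw [← sub_eq_zero, ← map_sub, toZModPow_eq_zero_iff]
  rcases pow_succ_dvd_or_pow_succ_dvd_sub h with h | h
  · convert dvd_sub (hf.pow_dvd_sub h) h using 1
    ring
  · have hshift := hf.pow_dvd_sub (x := x) (y := y + 2 ^ n) (by convert h using 1; ring)
    convert dvd_sub (dvd_add hshift (pow_succ_dvd_add_pow_sub hf hE y)) h using 1
    ring

theorem pow_succ_dvd_sum_range (hf : Compatible f) (hE : ErgodicZ f) (a : ℤ_[2]) :
    (2 : ℤ_[2]) ^ (n + 1) ∣ ∑ j ∈ range (2 ^ n), (f (a + j) - (a + j) - 1) := by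
  have horbit := hf.sum_range_iterate_eq_sum_range_add (hE n)
    (h := fun y => toZModPow (n + 1) (f y - y - 1))
    (fun _ _ => toZModPow_sub_sub_one_eq hf hE) a a
  rw [← map_sum, ← map_sum, sum_range_iterate_sub_sub_one] at horbit
  rw [← toZModPow_eq_zero_iff, ← horbit, toZModPow_eq_zero_iff]
  exact_mod_cast pow_succ_dvd_iterate_sub hf hE a

theorem two_dvd_sub_sub_one (hf : Compatible f) (hE : ErgodicZ f) (x : ℤ_[2]) :
    2 ∣ f x - x - 1 := by
  simpa using pow_succ_dvd_sum_range (n := 0) hf hE x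

end ErgodicZ

theorem Compatible.pow_dvd_sum_range_fwdDiff_iterate {f v : ℤ_[2] → ℤ_[2]} {n : ℕ}
    (hf : Compatible f) (hn : IsSingleCycle (inducedMap n f)) (hv : Compatible v) (x : ℤ_[2]) :
    (2 : ℤ_[2]) ^ n ∣ ∑ k ∈ range (2 ^ n), Δ_[1] v (f^[k] x) := by
  have horbit := hf.sum_range_iterate_eq_sum_range_add hn
    (h := fun y => toZModPow n (Δ_[1] v y)) (fun _ _ => (hv.fwdDiff 1).toZModPow_eq) x 0
  rw [← map_sum, ← map_sum] at horbit
  rw [← toZModPow_eq_zero_iff, horbit, toZModPow_eq_zero_iff]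
  have htel := sum_range_sub (fun j : ℕ => v j) (2 ^ n)
  simp only [Nat.cast_add, Nat.cast_one] at htel
  simp only [zero_add, _root_.fwdDiff, htel, Nat.cast_pow, Nat.cast_ofNat, Nat.cast_zero]
  exact hv.pow_dvd_sub (by simp)

theorem pow_succ_dvd_iterate_sub_of_fwdDiff {f v : ℤ_[2] → ℤ_[2]} {n : ℕ} (hv : Compatible v)
    (hfv : ∀ x, f x = 1 + x + 2 * Δ_[1] v x) (hn : IsSingleCycle (inducedMap n f))
    (x : ℤ_[2]) : (2 : ℤ_[2]) ^ (n + 1) ∣ f^[2 ^ n] x - x - 2 ^ n := by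
  have hterm : ∀ k, f (f^[k] x) - f^[k] x - 1 = 2 * Δ_[1] v (f^[k] x) := fun k => by
    rw [hfv]
    ring
  have htel := sum_range_iterate_sub_sub_one f x (2 ^ n)
  rw [sum_congr rfl fun k _ => hterm k, ← mul_sum] at htel
  push_cast at htel
  rw [← htel, pow_succ']
  exact mul_dvd_mul_left 2
    (((hv.fwdDiff 1).one_add_add_two_mul hfv).pow_dvd_sum_range_fwdDiff_iterate hn hv x)

theorem ergodicZ_of_fwdDiff {f v : ℤ_[2] → ℤ_[2]} (hv : Compatible v)
    (hfv : ∀ x, f x = 1 + x + 2 * Δ_[1] v x) : ErgodicZ f := by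
  have hf := (hv.fwdDiff 1).one_add_add_two_mul hfv
  intro n
  induction n with
  | zero => exact hf.isSingleCycle_inducedMap_iff.2 fun x y => ⟨0, by simp⟩
  | succ n ih =>
    exact hf.isSingleCycle_inducedMap_succ ih (pow_succ_dvd_iterate_sub_of_fwdDiff hv hfv ih)

theorem ErgodicZ.exists_fwdDiff {f : ℤ_[2] → ℤ_[2]} (hf : Compatible f) (hE : ErgodicZ f) :
    ∃ v : ℤ_[2] → ℤ_[2], Compatible v ∧ ∀ x, f x = 1 + x + 2 * Δ_[1] v x := by
  choose w hw using hE.two_dvd_sub_sub_one hf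
  set S : ℕ → ℤ_[2] := fun k => ∑ j ∈ range k, w j
  have hS : ∀ n a, (2 : ℤ_[2]) ^ n ∣ S (a + 2 ^ n) - S a := fun n a => by
    simp only [S]
    rw [sum_range_add, add_sub_cancel_left, ← mul_dvd_mul_iff_left (two_ne_zero (α := ℤ_[2])),
      ← pow_succ', mul_sum]
    simpa only [← hw, Nat.cast_add] using hE.pow_succ_dvd_sum_range hf (a : ℤ_[2])
  obtain ⟨v, hv, hvS⟩ := exists_compatible_eq_natCast fun n a b =>
    pow_dvd_sub_of_forall_pow_dvd_add_pow_sub (S := S) (hS n)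
  refine ⟨v, hv, hf.eq_of_forall_natCast ((hv.fwdDiff 1).one_add_add_two_mul fun _ => rfl)
    fun k => ?_⟩
  simp only [fwdDiff]
  rw [← Nat.cast_add_one, hvS, hvS]
  simp only [S]
  rw [sum_range_succ, add_sub_cancel_left, ← hw]
  ring

/-- a compatible `f : ℤ₂ → ℤ₂` is ergodic iff
`f(x) = 1 + x + 2·(v(x+1) − v(x))` for some compatible `v`. -/
theorem ergodic_iff_repr (f : ℤ_[2] → ℤ_[2]) (hf : Compatible f) :
    ErgodicZ f ↔
      ∃ v : ℤ_[2] → ℤ_[2], Compatible v ∧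
        ∀ x : ℤ_[2], f x = 1 + x + 2 * (v (x + 1) - v x) :=
  ⟨fun hE => hE.exists_fwdDiff hf, fun ⟨_, hv, hfv⟩ => ergodicZ_of_fwdDiff hv hfv⟩
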